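/- arXiv:math/9902043 — 2 statements merged into one kernel-verified Lean document; each statement's English description precedes it below -/
import Mathlib

section
/- There exists a constant c₁ > 0 such that for all sufficiently large n and every positive integer δ, the probability that A(x) > c₁/(2^δ · n³) is at least 1 − 2^{−δ}. -/
open MeasureTheory

/-- Area of the triangle with vertices `P`, `Q`, `R` in the plane:
`½ · |det (Q - P, R - P)|`. -/
noncomputable def triArea (P Q R : ℝ × ℝ) : ℝ :=
  |(Q.1 - P.1) * (R.2 - P.2) - (Q.2 - P.2) * (R.1 - P.1)| / 2

/-- Minimum area of a triangle formed by three of the points `x 0, …, x (n-1)`. -/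
noncomputable def minTriArea (n : ℕ) (x : Fin n → ℝ × ℝ) : ℝ :=
  sInf {a | ∃ i j k : Fin n, i < j ∧ j < k ∧ a = triArea (x i) (x j) (x k)}

/-- Uniform probability measure on the unit square `[0,1]²`. -/
noncomputable def unifSq : Measure (ℝ × ℝ) :=
  volume.restrict (Set.Icc ((0, 0) : ℝ × ℝ) (1, 1))

/-- Joint distribution of `n` points chosen independently and uniformly in `[0,1]²`. -/
noncomputable def μpts (n : ℕ) : Measure (Fin n → ℝ × ℝ) :=
  Measure.pi fun _ => unifSq

/-! For fixed `P` and `Q`, the points `R` with `triArea P Q R ≤ ε` form a strip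
`|a + s R₁ + t R₂| ≤ 2ε` with `(s, t) = (P₂ - Q₂, Q₁ - P₁)`. Slicing the unit square along either
coordinate bounds its mass by `4ε min (1/|s|, 1/|t|) ≤ 4ε |s|^{-1/2} |t|^{-1/2}`, and the right
side, unlike `1/|t|` alone, is integrable in `Q`: it factorises, and `∫₀¹ |u - p|^{-1/2} du ≤ 4`.
Hence three independent uniform points span a triangle of area `≤ ε` with probability at most
`64ε`, and a union bound over the at most `n³` triples, with `ε = 2^{-δ} n^{-3} / 64`, gives the
theorem. -/

open Set ProbabilityTheory
open scoped ENNReal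

noncomputable def unifIcc : Measure ℝ := volume.restrict (Icc 0 1)

instance : IsProbabilityMeasure unifIcc :=
  ⟨by simp [unifIcc, Real.volume_Icc]⟩

lemma unifSq_eq_prod : unifSq = unifIcc.prod unifIcc := by
  rw [unifSq, unifIcc, Measure.prod_restrict, ← Measure.volume_eq_prod, Icc_prod_eq]

instance : IsProbabilityMeasure unifSq := by
  rw [unifSq_eq_prod]; infer_instance

instance (n : ℕ) : IsProbabilityMeasure (μpts n) := by
  rw [μpts]; infer_instance

noncomputable def invSqrtAbs (v : ℝ) : ℝ≥0∞ := (ENNReal.ofReal √|v|)⁻¹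

@[fun_prop]
lemma measurable_invSqrtAbs : Measurable invSqrtAbs := by
  unfold invSqrtAbs; fun_prop

@[simp]
lemma invSqrtAbs_neg (v : ℝ) : invSqrtAbs (-v) = invSqrtAbs v := by
  simp [invSqrtAbs]

lemma lintegral_Icc_zero_one_invSqrtAbs : ∫⁻ v in Icc (0:ℝ) 1, invSqrtAbs v ≤ 2 := by
  have hrpow : IntegrableOn (fun v : ℝ => v ^ (-(1/2) : ℝ)) (Ioc 0 1) := by
    rw [← intervalIntegrable_iff_integrableOn_Ioc_of_le zero_le_one]
    exact intervalIntegral.intervalIntegrable_rpow' (by norm_num)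
  have hae : ∀ᵐ v ∂volume.restrict (Ioc (0:ℝ) 1),
      invSqrtAbs v = ENNReal.ofReal (v ^ (-(1/2) : ℝ)) := by
    filter_upwards [ae_restrict_mem measurableSet_Ioc] with v hv
    rw [invSqrtAbs, abs_of_pos hv.1, ← ENNReal.ofReal_inv_of_pos (Real.sqrt_pos.2 hv.1),
      Real.sqrt_eq_rpow, ← Real.rpow_neg hv.1.le]
  rw [setLIntegral_congr Ioc_ae_eq_Icc.symm, lintegral_congr_ae hae,
    ← ofReal_integral_eq_lintegral_ofReal hrpow
      (ae_restrict_of_forall_mem measurableSet_Ioc fun v hv => Real.rpow_nonneg hv.1.le _),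
    ← intervalIntegral.integral_of_le zero_le_one, integral_rpow (by norm_num)]
  norm_num

lemma lintegral_Icc_neg_one_one_invSqrtAbs : ∫⁻ v in Icc (-1:ℝ) 1, invSqrtAbs v ≤ 4 := by
  have hreflect : ∫⁻ v in Icc (-1:ℝ) 0, invSqrtAbs v = ∫⁻ v in Icc (0:ℝ) 1, invSqrtAbs v := by
    have := (Measure.measurePreserving_neg (volume : Measure ℝ)).setLIntegral_comp_preimage_emb
      (Homeomorph.neg ℝ).measurableEmbedding invSqrtAbs (Icc (-1) 0)
    simpa using this.symm
  calc ∫⁻ v in Icc (-1:ℝ) 1, invSqrtAbs v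
      ≤ (∫⁻ v in Icc (-1:ℝ) 0, invSqrtAbs v) + ∫⁻ v in Icc (0:ℝ) 1, invSqrtAbs v := by
        rw [← Icc_union_Icc_eq_Icc (by norm_num) zero_le_one]
        exact lintegral_union_le _ _ _
    _ ≤ 2 + 2 := by
        rw [hreflect]
        exact add_le_add lintegral_Icc_zero_one_invSqrtAbs lintegral_Icc_zero_one_invSqrtAbs
    _ = 4 := by norm_num

lemma lintegral_unifIcc_invSqrtAbs_sub_le {p : ℝ} (hp : p ∈ Icc (0:ℝ) 1) :
    ∫⁻ u, invSqrtAbs (u - p) ∂unifIcc ≤ 4 := by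
  have htranslate := (measurePreserving_sub_right volume p).setLIntegral_comp_preimage_emb
    (measurableEmbedding_subRight p) invSqrtAbs (Icc (-p) (1 - p))
  rw [preimage_sub_const_Icc, neg_add_cancel, sub_add_cancel] at htranslate
  rw [unifIcc, htranslate]
  calc ∫⁻ v in Icc (-p) (1 - p), invSqrtAbs v
      ≤ ∫⁻ v in Icc (-1:ℝ) 1, invSqrtAbs v :=
        lintegral_mono_set (Icc_subset_Icc (by linarith [hp.2]) (by linarith [hp.1]))
    _ ≤ 4 := lintegral_Icc_neg_one_one_invSqrtAbs

lemma volume_abs_add_mul_le (a t : ℝ) {η : ℝ} (hη : 0 < η) :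
    volume {r : ℝ | |a + t * r| ≤ η} ≤ ENNReal.ofReal (2 * η) * (ENNReal.ofReal |t|)⁻¹ := by
  rcases eq_or_ne t 0 with rfl | ht
  · simp [ENNReal.mul_top, hη]
  have hsub : {r : ℝ | |a + t * r| ≤ η} ⊆ Metric.closedBall (-a / t) (η / |t|) := by
    intro r hr
    rw [Metric.mem_closedBall, Real.dist_eq, le_div_iff₀ (abs_pos.2 ht), ← abs_mul]
    calc |(r - -a / t) * t| = |a + t * r| := by congr 1; field_simp; ring
      _ ≤ η := hr
  calc volume {r : ℝ | |a + t * r| ≤ η}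
      ≤ volume (Metric.closedBall (-a / t) (η / |t|)) := measure_mono hsub
    _ = ENNReal.ofReal (2 * η) * (ENNReal.ofReal |t|)⁻¹ := by
        rw [Real.volume_closedBall, ← ENNReal.ofReal_inv_of_pos (abs_pos.2 ht),
          ← ENNReal.ofReal_mul (by positivity), div_eq_mul_inv, mul_assoc]

lemma min_inv_le_invSqrtAbs_mul (a b : ℝ) :
    min (ENNReal.ofReal |a|)⁻¹ (ENNReal.ofReal |b|)⁻¹ ≤ invSqrtAbs a * invSqrtAbs b := by
  wlog hab : |a| ≤ |b| generalizing a b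
  · rw [min_comm, mul_comm]; exact this b a (le_of_not_ge hab)
  refine (min_le_right _ _).trans ?_
  rw [invSqrtAbs, invSqrtAbs, ← ENNReal.mul_inv (.inr ENNReal.ofReal_ne_top)
    (.inl ENNReal.ofReal_ne_top), ← ENNReal.ofReal_mul (Real.sqrt_nonneg _)]
  gcongr
  calc √|a| * √|b| ≤ √|b| * √|b| := by gcongr
    _ = |b| := Real.mul_self_sqrt (abs_nonneg b)

lemma unifSq_abs_affine_le (a s t : ℝ) {η : ℝ} (hη : 0 < η) :
    unifSq {R | |a + s * R.1 + t * R.2| ≤ η} ≤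
      ENNReal.ofReal (2 * η) * min (ENNReal.ofReal |s|)⁻¹ (ENNReal.ofReal |t|)⁻¹ := by
  have hS : MeasurableSet {R : ℝ × ℝ | |a + s * R.1 + t * R.2| ≤ η} :=
    measurableSet_le (by fun_prop) measurable_const
  have hslice (b c : ℝ) : unifIcc {r | |b + c * r| ≤ η} ≤
      ENNReal.ofReal (2 * η) * (ENNReal.ofReal |c|)⁻¹ :=
    (Measure.restrict_le_self _).trans (volume_abs_add_mul_le b c hη)
  rw [mul_min]
  refine le_min ?_ ?_
  · rw [unifSq_eq_prod, Measure.prod_apply_symm hS]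
    calc _ ≤ ∫⁻ _, ENNReal.ofReal (2 * η) * (ENNReal.ofReal |s|)⁻¹ ∂unifIcc :=
          lintegral_mono fun y => by
            simpa only [preimage_ofPred_eq, add_right_comm a] using hslice (a + t * y) s
      _ = _ := by simp
  · rw [unifSq_eq_prod, Measure.prod_apply hS]
    calc _ ≤ ∫⁻ _, ENNReal.ofReal (2 * η) * (ENNReal.ofReal |t|)⁻¹ ∂unifIcc :=
          lintegral_mono fun x => hslice (a + s * x) t
      _ = _ := by simp

lemma unifSq_triArea_le (P Q : ℝ × ℝ) {ε : ℝ} (hε : 0 < ε) :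
    unifSq {R | triArea P Q R ≤ ε} ≤
      ENNReal.ofReal (4 * ε) * (invSqrtAbs (Q.1 - P.1) * invSqrtAbs (Q.2 - P.2)) := by
  have harea (R : ℝ × ℝ) : triArea P Q R =
      |((Q.2 - P.2) * P.1 - (Q.1 - P.1) * P.2) + (P.2 - Q.2) * R.1 + (Q.1 - P.1) * R.2| / 2 := by
    rw [triArea]; ring_nf
  have hset : {R | triArea P Q R ≤ ε} =
      {R | |((Q.2 - P.2) * P.1 - (Q.1 - P.1) * P.2) + (P.2 - Q.2) * R.1 + (Q.1 - P.1) * R.2|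
        ≤ 2 * ε} := by
    ext R; rw [mem_ofPred_eq, harea, div_le_iff₀ two_pos, mul_comm ε]; rfl
  rw [hset]
  calc _ ≤ ENNReal.ofReal (2 * (2 * ε)) *
        min (ENNReal.ofReal |P.2 - Q.2|)⁻¹ (ENNReal.ofReal |Q.1 - P.1|)⁻¹ :=
        unifSq_abs_affine_le _ _ _ (by positivity)
    _ ≤ ENNReal.ofReal (4 * ε) * (invSqrtAbs (Q.1 - P.1) * invSqrtAbs (Q.2 - P.2)) := by
        rw [show (2:ℝ) * (2 * ε) = 4 * ε by ring]
        gcongr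
        rw [mul_comm, ← invSqrtAbs_neg (Q.2 - P.2), neg_sub]
        exact min_inv_le_invSqrtAbs_mul _ _

lemma lintegral_unifSq_invSqrtAbs_sub_le {P : ℝ × ℝ} (hP : P ∈ Icc ((0, 0) : ℝ × ℝ) (1, 1)) :
    ∫⁻ Q, invSqrtAbs (Q.1 - P.1) * invSqrtAbs (Q.2 - P.2) ∂unifSq ≤ 16 := by
  rw [unifSq_eq_prod, lintegral_prod_mul (f := fun u => invSqrtAbs (u - P.1))
    (g := fun v => invSqrtAbs (v - P.2)) (by fun_prop) (by fun_prop)]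
  calc _ ≤ (4 : ℝ≥0∞) * 4 :=
        mul_le_mul' (lintegral_unifIcc_invSqrtAbs_sub_le ⟨hP.1.1, hP.2.1⟩)
          (lintegral_unifIcc_invSqrtAbs_sub_le ⟨hP.1.2, hP.2.2⟩)
    _ = 16 := by norm_num

lemma measurableSet_triArea_le (ε : ℝ) :
    MeasurableSet {w : ((ℝ × ℝ) × (ℝ × ℝ)) × (ℝ × ℝ) | triArea w.1.1 w.1.2 w.2 ≤ ε} :=
  measurableSet_le (by unfold triArea; fun_prop) measurable_const

lemma prod_unifSq_triArea_le {ε : ℝ} (hε : 0 < ε) :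
    ((unifSq.prod unifSq).prod unifSq) {w | triArea w.1.1 w.1.2 w.2 ≤ ε} ≤
      ENNReal.ofReal (64 * ε) := by
  have hinner : ∀ᵐ P ∂unifSq,
      ∫⁻ Q, invSqrtAbs (Q.1 - P.1) * invSqrtAbs (Q.2 - P.2) ∂unifSq ≤ 16 := by
    filter_upwards [ae_restrict_mem measurableSet_Icc] with P hP
    exact lintegral_unifSq_invSqrtAbs_sub_le hP
  rw [Measure.prod_apply (measurableSet_triArea_le ε)]
  calc _ ≤ ∫⁻ PQ : (ℝ × ℝ) × (ℝ × ℝ), ENNReal.ofReal (4 * ε) *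
          (invSqrtAbs (PQ.2.1 - PQ.1.1) * invSqrtAbs (PQ.2.2 - PQ.1.2)) ∂unifSq.prod unifSq :=
        lintegral_mono fun PQ => unifSq_triArea_le PQ.1 PQ.2 hε
    _ = ENNReal.ofReal (4 * ε) * ∫⁻ P, ∫⁻ Q,
          invSqrtAbs (Q.1 - P.1) * invSqrtAbs (Q.2 - P.2) ∂unifSq ∂unifSq := by
        rw [lintegral_const_mul _ (by fun_prop), lintegral_prod _ (by fun_prop)]
    _ ≤ ENNReal.ofReal (4 * ε) * ∫⁻ _, 16 ∂unifSq :=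
        mul_le_mul_right (lintegral_mono_ae hinner) _
    _ = ENNReal.ofReal (64 * ε) := by
        rw [lintegral_const, measure_univ, mul_one, ← ENNReal.ofReal_ofNat 16,
          ← ENNReal.ofReal_mul (by positivity)]
        ring_nf

lemma map_pi_eval_triple {ι : Type*} [Fintype ι] {α : ι → Type*} [∀ i, MeasurableSpace (α i)]
    (μ : ∀ i, Measure (α i)) [∀ i, IsProbabilityMeasure (μ i)] {i j k : ι}
    (hij : i ≠ j) (hik : i ≠ k) (hjk : j ≠ k) :
    (Measure.pi μ).map (fun x => ((x i, x j), x k)) = ((μ i).prod (μ j)).prod (μ k) := by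
  have hindep : iIndepFun (fun l (x : ∀ l, α l) => x l) (Measure.pi μ) :=
    iIndepFun_pi (X := fun _ => id) fun _ => aemeasurable_id
  have hmarginal (l : ι) : (Measure.pi μ).map (fun x => x l) = μ l :=
    (measurePreserving_eval μ l).map_eq
  have hmeas (l : ι) : Measurable fun x : ∀ l, α l => x l := measurable_pi_apply l
  rw [(indepFun_iff_map_prod_eq_prod_map_map ((hmeas i).prodMk (hmeas j)).aemeasurable
      (hmeas k).aemeasurable).1 (hindep.indepFun_prodMk hmeas i j k hik hjk),
    (indepFun_iff_map_prod_eq_prod_map_map (hmeas i).aemeasurable (hmeas j).aemeasurable).1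
      (hindep.indepFun hij),
    hmarginal, hmarginal, hmarginal]

lemma μpts_triArea_le {n : ℕ} {i j k : Fin n} (hij : i ≠ j) (hik : i ≠ k) (hjk : j ≠ k)
    {ε : ℝ} (hε : 0 < ε) :
    μpts n {x | triArea (x i) (x j) (x k) ≤ ε} ≤ ENNReal.ofReal (64 * ε) := by
  calc μpts n {x | triArea (x i) (x j) (x k) ≤ ε}
      = (μpts n).map (fun x => ((x i, x j), x k)) {w | triArea w.1.1 w.1.2 w.2 ≤ ε} := by
        rw [Measure.map_apply (by fun_prop) (measurableSet_triArea_le ε)]; rfl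
    _ = ((unifSq.prod unifSq).prod unifSq) {w | triArea w.1.1 w.1.2 w.2 ≤ ε} := by
        rw [μpts, map_pi_eval_triple (fun _ => unifSq) hij hik hjk]
    _ ≤ ENNReal.ofReal (64 * ε) := prod_unifSq_triArea_le hε

lemma exists_triArea_le_of_minTriArea_le {n : ℕ} (hn : 3 ≤ n) {x : Fin n → ℝ × ℝ} {ε : ℝ}
    (h : minTriArea n x ≤ ε) : ∃ i j k : Fin n, i < j ∧ j < k ∧ triArea (x i) (x j) (x k) ≤ ε := by
  have hfin : {a | ∃ i j k : Fin n, i < j ∧ j < k ∧ a = triArea (x i) (x j) (x k)}.Finite :=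
    (finite_range fun t : Fin n × Fin n × Fin n => triArea (x t.1) (x t.2.1) (x t.2.2)).subset
      fun _ ⟨i, j, k, _, _, ha⟩ => ⟨(i, j, k), ha.symm⟩
  have hne : {a | ∃ i j k : Fin n, i < j ∧ j < k ∧ a = triArea (x i) (x j) (x k)}.Nonempty :=
    ⟨_, ⟨0, by omega⟩, ⟨1, by omega⟩, ⟨2, by omega⟩, Fin.mk_lt_mk.2 (by omega),
      Fin.mk_lt_mk.2 (by omega), rfl⟩
  obtain ⟨i, j, k, hij, hjk, hmin⟩ := hne.csInf_mem hfin
  exact ⟨i, j, k, hij, hjk, hmin ▸ h⟩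

lemma μpts_minTriArea_le {n : ℕ} (hn : 3 ≤ n) {ε : ℝ} (hε : 0 < ε) :
    μpts n {x | minTriArea n x ≤ ε} ≤ (n : ℝ≥0∞) ^ 3 * ENNReal.ofReal (64 * ε) := by
  have hcover : {x | minTriArea n x ≤ ε} ⊆ ⋃ t : Fin n × Fin n × Fin n,
      {x | t.1 < t.2.1 ∧ t.2.1 < t.2.2 ∧ triArea (x t.1) (x t.2.1) (x t.2.2) ≤ ε} := by
    intro x hx
    obtain ⟨i, j, k, hijk⟩ := exists_triArea_le_of_minTriArea_le hn hx
    exact mem_iUnion.2 ⟨(i, j, k), hijk⟩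
  have hterm (t : Fin n × Fin n × Fin n) : μpts n
      {x | t.1 < t.2.1 ∧ t.2.1 < t.2.2 ∧ triArea (x t.1) (x t.2.1) (x t.2.2) ≤ ε} ≤
      ENNReal.ofReal (64 * ε) := by
    by_cases ht : t.1 < t.2.1 ∧ t.2.1 < t.2.2
    · simpa only [ht, true_and] using μpts_triArea_le ht.1.ne (ht.1.trans ht.2).ne ht.2.ne hε
    · have hempty : {x : Fin n → ℝ × ℝ |
          t.1 < t.2.1 ∧ t.2.1 < t.2.2 ∧ triArea (x t.1) (x t.2.1) (x t.2.2) ≤ ε} = ∅ :=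
        eq_empty_of_forall_notMem fun _ hx => ht ⟨hx.1, hx.2.1⟩
      simp [hempty]
  calc μpts n {x | minTriArea n x ≤ ε}
      ≤ ∑ t : Fin n × Fin n × Fin n, μpts n
          {x | t.1 < t.2.1 ∧ t.2.1 < t.2.2 ∧ triArea (x t.1) (x t.2.1) (x t.2.2) ≤ ε} :=
        (measure_mono hcover).trans (measure_iUnion_fintype_le _ _)
    _ ≤ ∑ _t : Fin n × Fin n × Fin n, ENNReal.ofReal (64 * ε) :=
        Finset.sum_le_sum fun t _ => hterm t
    _ = (n : ℝ≥0∞) ^ 3 * ENNReal.ofReal (64 * ε) := by simp [pow_succ, mul_assoc]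

theorem min_triangle_area_lower_bound_whp :
    ∃ c₁ : ℝ, 0 < c₁ ∧ ∃ N : ℕ, ∀ n : ℕ, N ≤ n → ∀ δ : ℕ, 0 < δ →
      μpts n {x | c₁ / (2 ^ δ * (n : ℝ) ^ 3) < minTriArea n x} ≥ 1 - 1 / 2 ^ δ := by
  refine ⟨1 / 64, by norm_num, 3, fun n hn δ _ => ?_⟩
  set ε : ℝ := 1 / 64 / (2 ^ δ * (n : ℝ) ^ 3) with hε
  have hn0 : (0 : ℝ) < n := Nat.cast_pos.2 (by omega)
  have hscale : (n : ℝ) ^ 3 * (64 * ε) = (2 ^ δ)⁻¹ := by rw [hε]; field_simp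
  have hbad : μpts n {x | minTriArea n x ≤ ε} ≤ 1 / 2 ^ δ :=
    calc _ ≤ (n : ℝ≥0∞) ^ 3 * ENNReal.ofReal (64 * ε) := μpts_minTriArea_le hn (by positivity)
      _ = 1 / 2 ^ δ := by
        rw [← ENNReal.ofReal_natCast, ← ENNReal.ofReal_pow hn0.le,
          ← ENNReal.ofReal_mul (by positivity), hscale, ENNReal.ofReal_inv_of_pos (by positivity),
          ENNReal.ofReal_pow zero_le_two, ENNReal.ofReal_ofNat, one_div]
  rw [ge_iff_le, tsub_le_iff_right]
  calc 1 = μpts n univ := measure_univ.symm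
    _ ≤ μpts n {x | ε < minTriArea n x} + μpts n {x | ε < minTriArea n x}ᶜ :=
        measure_univ_le_add_compl _
    _ ≤ μpts n {x | ε < minTriArea n x} + 1 / 2 ^ δ := by
        gcongr
        simpa only [compl_ofPred, not_lt] using hbad
end

section
/- For all integers n ≥ 2 and K ≥ 2, the number of n-element subsets of the K×K grid that contain two distinct points with the same second coordinate (i.e., lying on the same horizontal grid line) is at most binom(K², n−1) · (n−1) · (K−1). -/
/-!
A set `S` with two distinct points `P ≠ Q` on one horizontal line is recovered from
`T = S \ {P}`, the point `Q ∈ T`, and the abscissa `P.1 ≠ Q.1`, as `S = T ∪ {(P.1, Q.2)}`.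
There are at most `binom(K², n−1) · (n−1) · (K−1)` such triples.
-/

/-- The `K × K` grid `{0, 1, …, K−1}² ⊆ ℤ²`. -/
def grid (K : ℕ) : Finset (ℤ × ℤ) :=
  (Finset.range K ×ˢ Finset.range K).image fun p => ((p.1 : ℤ), (p.2 : ℤ))

/-- A grid point viewed as a point of `ℝ²`. -/
def toR (p : ℤ × ℤ) : ℝ × ℝ := ((p.1 : ℝ), (p.2 : ℝ))

open Finset

section HorizontalPairs

variable {α β : Type*} [DecidableEq α]

def horizontalPairData (G : Finset (α × β)) (X : Finset α) (m : ℕ) :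
    Finset (Σ _ : Finset (α × β), Σ _ : α × β, α) :=
  (G.powersetCard m).sigma fun T => T.sigma fun Q => X.erase Q.1

theorem card_horizontalPairData {G : Finset (α × β)} {X : Finset α} (hGX : ∀ p ∈ G, p.1 ∈ X)
    (m : ℕ) : (horizontalPairData G X m).card = G.card.choose m * m * (X.card - 1) := by
  rw [horizontalPairData, card_sigma, sum_const_nat (m := m * (X.card - 1)), card_powersetCard,
    mul_assoc]
  intro T hT
  rw [mem_powersetCard] at hT
  rw [card_sigma, sum_const_nat (m := X.card - 1), hT.2]
  exact fun Q hQ => card_erase_of_mem (hGX Q (hT.1 hQ))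

theorem exists_horizontalPairData_insert_eq [DecidableEq β] {G : Finset (α × β)} {X : Finset α}
    (hGX : ∀ p ∈ G, p.1 ∈ X) {n : ℕ} {S : Finset (α × β)} (hS : S ∈ G.powersetCard n)
    (h : ∃ P ∈ S, ∃ Q ∈ S, P ≠ Q ∧ P.2 = Q.2) :
    ∃ d ∈ horizontalPairData G X (n - 1), insert (d.2.2, d.2.1.2) d.1 = S := by
  obtain ⟨P, hP, Q, hQ, hPQ, hy⟩ := h
  rw [mem_powersetCard] at hS
  have hx : P.1 ≠ Q.1 := fun hx => hPQ (Prod.ext hx hy)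
  refine ⟨⟨S.erase P, Q, P.1⟩, ?_, ?_⟩
  · simp only [horizontalPairData, mem_sigma, mem_powersetCard, mem_erase]
    exact ⟨⟨(erase_subset P S).trans hS.1, by rw [card_erase_of_mem hP, hS.2]⟩,
      ⟨hPQ.symm, hQ⟩, hx, hGX P (hS.1 hP)⟩
  · rw [← hy]
    exact insert_erase hP

theorem card_filter_horizontal_pair_le [DecidableEq β] {G : Finset (α × β)} {X : Finset α}
    (hGX : ∀ p ∈ G, p.1 ∈ X) (n : ℕ) :
    {S ∈ G.powersetCard n | ∃ P ∈ S, ∃ Q ∈ S, P ≠ Q ∧ P.2 = Q.2}.card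
      ≤ G.card.choose (n - 1) * (n - 1) * (X.card - 1) := by
  calc _ ≤ ((horizontalPairData G X (n - 1)).image
          fun d => insert (d.2.2, d.2.1.2) d.1).card := by
        refine card_le_card fun S hS => ?_
        rw [mem_filter] at hS
        exact mem_image.2 (exists_horizontalPairData_insert_eq hGX hS.1 hS.2)
    _ ≤ _ := card_image_le
    _ = _ := card_horizontalPairData hGX _

end HorizontalPairs

theorem card_grid (K : ℕ) : (grid K).card = K ^ 2 := by
  rw [grid, card_image_of_injective, card_product, card_range, sq]
  intro a b h
  simp only [Prod.ext_iff, Nat.cast_inj] at h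
  exact Prod.ext h.1 h.2

theorem fst_mem_of_mem_grid {K : ℕ} {p : ℤ × ℤ} (hp : p ∈ grid K) :
    p.1 ∈ (range K).image (Nat.cast : ℕ → ℤ) := by
  simp only [grid, mem_image, mem_product, mem_range] at hp
  obtain ⟨⟨a, b⟩, ⟨ha, _⟩, rfl⟩ := hp
  exact mem_image_of_mem _ (mem_range.2 ha)

open Classical in
theorem count_same_horizontal_line_subsets_le_general (n K : ℕ) :
    (((grid K).powersetCard n).filter fun S => ∃ P ∈ S, ∃ Q ∈ S,
        P ≠ Q ∧ P.2 = Q.2).card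
      ≤ (K ^ 2).choose (n - 1) * (n - 1) * (K - 1) := by
  have hX : ((range K).image (Nat.cast : ℕ → ℤ)).card = K := by
    rw [card_image_of_injective _ Nat.cast_injective, card_range]
  convert card_filter_horizontal_pair_le (fun _ => fst_mem_of_mem_grid) n using 2
  · rw [card_grid]
  · rw [hX]

open Classical in
theorem count_same_horizontal_line_subsets_le (n K : ℕ) (hn : 2 ≤ n) (hK : 2 ≤ K) :
    (((grid K).powersetCard n).filter fun S => ∃ P ∈ S, ∃ Q ∈ S,
        P ≠ Q ∧ P.2 = Q.2).card
      ≤ (K ^ 2).choose (n - 1) * (n - 1) * (K - 1) :=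
  count_same_horizontal_line_subsets_le_general n K
end
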